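/- arXiv:1511.02692 — 4 statements merged into one kernel-verified Lean document; each statement's English description precedes it below -/
import Mathlib

section
/- The generating function for antichains of the product of chains [n] × [m] by cardinality is 𝒩_{[n]×[m]}(t) = Σ_{i≥0} C(n,i) C(m,i) t^i; equivalently, the number of antichains of size i in [n] × [m] equals C(n,i)·C(m,i). -/
/-!
Projecting an antichain `A` of a product of two linear orders to either factor is injective on
`A`, and the points of `A` ordered by their first coordinate have strictly decreasing second
coordinates. So `A` is determined by its two projections `S` and `T`: the point over the `j`-th
smallest element of `S` sits at the `j`-th largest element of `T`. Conversely any two sets of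
equal size `k` are paired this way, so antichains of size `k` correspond to pairs of `k`-subsets.
-/

open Finset

variable {α β : Type*}

theorem IsAntichain.injOn_fst [Preorder α] [LinearOrder β] {A : Set (α × β)}
    (hA : IsAntichain (· ≤ ·) A) : A.InjOn Prod.fst := by
  intro a ha b hb hab
  by_contra hne
  rcases le_total a.2 b.2 with h | h
  · exact hA ha hb hne ⟨hab.le, h⟩
  · exact hA hb ha (Ne.symm hne) ⟨hab.ge, h⟩

theorem IsAntichain.injOn_snd [LinearOrder α] [Preorder β] {A : Set (α × β)}
    (hA : IsAntichain (· ≤ ·) A) : A.InjOn Prod.snd := by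
  intro a ha b hb hab
  by_contra hne
  rcases le_total a.1 b.1 with h | h
  · exact hA ha hb hne ⟨h, hab.le⟩
  · exact hA hb ha (Ne.symm hne) ⟨h, hab.ge⟩

theorem Finset.injOn_card_filter_lt [LinearOrder β] (T : Finset β) :
    Set.InjOn (fun t => #(T.filter (t < ·))) T := by
  intro t ht t' ht' h
  by_contra hne
  wlog hlt : t < t' generalizing t t'
  · exact this ht' ht h.symm (Ne.symm hne) ((not_lt.1 hlt).lt_of_ne' hne)
  have hsub : T.filter (t' < ·) ⊂ T.filter (t < ·) :=
    (ssubset_iff_of_subset (monotone_filter_right _ fun _ _ => hlt.trans)).2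
      ⟨t', mem_filter.2 ⟨ht', hlt⟩, fun h' => (mem_filter.1 h').2.false⟩
  exact (card_lt_card hsub).ne' h

section LinearOrder

variable [LinearOrder α] [LinearOrder β] {A B : Finset (α × β)}

theorem IsAntichain.card_image_fst (hA : IsAntichain (· ≤ ·) (A : Set (α × β))) :
    #(A.image Prod.fst) = #A :=
  card_image_of_injOn hA.injOn_fst

theorem IsAntichain.card_image_snd (hA : IsAntichain (· ≤ ·) (A : Set (α × β))) :
    #(A.image Prod.snd) = #A :=
  card_image_of_injOn hA.injOn_snd

theorem IsAntichain.filter_fst_lt_eq (hA : IsAntichain (· ≤ ·) (A : Set (α × β)))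
    {a : α × β} (ha : a ∈ A) : A.filter (·.1 < a.1) = A.filter (a.2 < ·.2) := by
  ext b
  simp only [mem_filter, and_congr_right_iff]
  intro hb
  constructor
  · intro h
    by_contra! h'
    exact hA hb ha (ne_of_apply_ne Prod.fst h.ne) ⟨h.le, h'⟩
  · intro h
    by_contra! h'
    exact hA ha hb (ne_of_apply_ne Prod.snd h.ne) ⟨h', h.le⟩

theorem IsAntichain.card_filter_image_fst_lt (hA : IsAntichain (· ≤ ·) (A : Set (α × β)))
    {a : α × β} (ha : a ∈ A) :
    #((A.image Prod.fst).filter (· < a.1)) = #((A.image Prod.snd).filter (a.2 < ·)) := by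
  rw [filter_image, filter_image,
    card_image_of_injOn (hA.injOn_fst.mono (coe_subset.2 (filter_subset _ _))),
    card_image_of_injOn (hA.injOn_snd.mono (coe_subset.2 (filter_subset _ _))),
    hA.filter_fst_lt_eq ha]

theorem IsAntichain.subset_of_image_eq (hA : IsAntichain (· ≤ ·) (A : Set (α × β)))
    (hB : IsAntichain (· ≤ ·) (B : Set (α × β)))
    (hfst : A.image Prod.fst = B.image Prod.fst) (hsnd : A.image Prod.snd = B.image Prod.snd) :
    A ⊆ B := by
  intro a ha
  obtain ⟨b, hb, hba⟩ := mem_image.1 (hfst ▸ mem_image_of_mem Prod.fst ha)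
  have hab : a.2 = b.2 :=
    (B.image Prod.snd).injOn_card_filter_lt (hsnd ▸ mem_image_of_mem Prod.snd ha)
      (mem_image_of_mem Prod.snd hb) <| by
        have h := hA.card_filter_image_fst_lt ha
        rw [hfst, hsnd, ← hba, hB.card_filter_image_fst_lt hb] at h
        exact h.symm
  rwa [Prod.ext hba.symm hab]

theorem IsAntichain.eq_of_image_eq (hA : IsAntichain (· ≤ ·) (A : Set (α × β)))
    (hB : IsAntichain (· ≤ ·) (B : Set (α × β)))
    (hfst : A.image Prod.fst = B.image Prod.fst) (hsnd : A.image Prod.snd = B.image Prod.snd) :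
    A = B :=
  (hA.subset_of_image_eq hB hfst hsnd).antisymm (hB.subset_of_image_eq hA hfst.symm hsnd.symm)

namespace Finset

def antiZip {k : ℕ} (S : Finset α) (T : Finset β) (hS : #S = k) (hT : #T = k) :
    Finset (α × β) :=
  univ.image fun j : Fin k => (S.orderEmbOfFin hS j, T.orderEmbOfFin hT j.rev)

variable {k : ℕ} (S : Finset α) (T : Finset β) (hS : #S = k) (hT : #T = k)

theorem isAntichain_antiZip : IsAntichain (· ≤ ·) (antiZip S T hS hT : Set (α × β)) := by
  simp only [antiZip, coe_image, coe_univ, Set.image_univ]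
  rintro _ ⟨j, rfl⟩ _ ⟨l, rfl⟩ hne hle
  rcases lt_or_gt_of_ne (show j ≠ l from fun h => hne (by rw [h])) with hjl | hlj
  · exact (T.orderEmbOfFin hT).strictMono (Fin.rev_lt_rev.2 hjl) |>.not_ge hle.2
  · exact (S.orderEmbOfFin hS).strictMono hlj |>.not_ge hle.1

theorem image_fst_antiZip : (antiZip S T hS hT).image Prod.fst = S := by
  rw [antiZip, image_image]
  exact S.image_orderEmbOfFin_univ hS

theorem image_snd_antiZip : (antiZip S T hS hT).image Prod.snd = T := by
  rw [antiZip, image_image]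
  change univ.image (T.orderEmbOfFin hT ∘ Fin.rev) = T
  rw [← image_image, image_univ_of_surjective Fin.rev_surjective, image_orderEmbOfFin_univ]

theorem card_antiZip : #(antiZip S T hS hT) = k := by
  rw [← (isAntichain_antiZip S T hS hT).card_image_fst, image_fst_antiZip, hS]

end Finset

noncomputable def antichainEquivProjections (k : ℕ) :
    {A : Finset (α × β) // IsAntichain (· ≤ ·) (A : Set (α × β)) ∧ #A = k} ≃
      {S : Finset α // #S = k} × {T : Finset β // #T = k} :=
  Equiv.ofBijective
    (fun A => (⟨A.1.image Prod.fst, A.2.1.card_image_fst.trans A.2.2⟩,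
      ⟨A.1.image Prod.snd, A.2.1.card_image_snd.trans A.2.2⟩))
    ⟨fun A B hAB => Subtype.ext <| A.2.1.eq_of_image_eq B.2.1
        (congrArg (·.1.1) hAB) (congrArg (·.2.1) hAB),
      fun ⟨⟨S, hS⟩, ⟨T, hT⟩⟩ =>
        ⟨⟨antiZip S T hS hT, isAntichain_antiZip S T hS hT, card_antiZip S T hS hT⟩,
          by simp only [image_fst_antiZip, image_snd_antiZip]⟩⟩

theorem card_antichains_prod [Fintype α] [Fintype β] (k : ℕ) :
    Nat.card {A : Finset (α × β) // IsAntichain (· ≤ ·) (A : Set (α × β)) ∧ #A = k} =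
      (Fintype.card α).choose k * (Fintype.card β).choose k := by
  rw [Nat.card_congr (antichainEquivProjections k), Nat.card_prod, Nat.card_eq_fintype_card,
    Nat.card_eq_fintype_card, Fintype.card_finset_len, Fintype.card_finset_len]

end LinearOrder

/-- The number of antichains of size `i` in the product of chains `[n] × [m]` equals
`C(n,i) * C(m,i)`; equivalently `𝒩_{[n]×[m]}(t) = Σ_i C(n,i) C(m,i) t^i`. -/
theorem antichains_prod_chains_count (n m i : ℕ) :
    Nat.card {A : Finset (Fin n × Fin m) //
        IsAntichain (· ≤ ·) (A : Set (Fin n × Fin m)) ∧ A.card = i} =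
      n.choose i * m.choose i := by
  simpa using card_antichains_prod (α := Fin n) (β := Fin m) i
end

section
/- The generating function of lower ideals of the product of two chains satisfies 𝓜_{[p]×[q]}(t) := Σ_I t^{|I|} = ∏_{(a,b) ∈ [p]×[q]} (1 - t^{a+b}) / (1 - t^{a+b-1}), i.e., [p] × [q] is pleasant with respect to the rank function r(a,b) = a+b-1. -/
/-!
Splitting the lower sets of a finite poset `P` according to whether they contain a fixed
element `x` gives `𝓜_P = 𝓜_{P ∖ ↑x} + t^|↓x| · 𝓜_{P ∖ ↓x}`. At the corner `x = (p, 1)` of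
`[p] × [q]` both remainders are again products of chains, and the recursion is the
`t`-Pascal rule; hence `𝓜_{[p]×[q]} = ∏_{k ≤ q} (1 - t^(p+k)) / (1 - t^k)` is a Gaussian
binomial. The product over `[p] × [q]` telescopes along each column to the same quotient.
-/

open Polynomial Finset
open scoped Classical

section LowerSetGF

variable {R : Type*} [CommSemiring R] (t : R)

/-- `𝓜_α(t)`. -/
noncomputable def lowerSetGF (α : Type*) [Fintype α] [Preorder α] : R :=
  ∑ I ∈ univ.filter (fun I : Finset α => IsLowerSet (I : Set α)), t ^ #I

variable {α β : Type*} [Fintype α] [Preorder α] [Fintype β] [Preorder β]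

theorem lowerSetGF_congr (e : α ≃o β) : lowerSetGF t α = lowerSetGF t β := by
  refine sum_equiv e.toEquiv.finsetCongr (fun I => ?_) (fun I _ => by simp)
  simp only [mem_filter, mem_univ, true_and, Equiv.finsetCongr_apply, coe_map]
  exact ⟨fun h => h.image e, fun h => by simpa using h.image e.symm⟩

theorem lowerSetGF_of_isEmpty [IsEmpty α] : lowerSetGF t α = 1 := by
  rw [lowerSetGF, univ_unique, Subsingleton.elim (default : Finset α) ∅, filter_singleton,
    if_pos (by simp [isLowerSet_empty])]
  simp

theorem sum_lowerSets_subset {S : Set α} [Fintype S] (hS : IsLowerSet S) :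
    ∑ I ∈ univ.filter (fun I : Finset α => IsLowerSet (I : Set α) ∧ (I : Set α) ⊆ S), t ^ #I =
      lowerSetGF t S := by
  symm
  refine sum_nbij' (fun J => J.map (Function.Embedding.subtype _)) (fun I => I.subtype (· ∈ S))
    ?_ ?_ (fun J _ => by ext; simp) ?_ (fun J _ => by rw [card_map])
  · intro J hJ
    simp only [coe_map, mem_filter, mem_univ, true_and] at hJ ⊢
    refine ⟨?_, by simp⟩
    rintro y z hzy ⟨y', hy', rfl⟩
    exact ⟨⟨z, hS hzy y'.2⟩, hJ hzy hy', rfl⟩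
  · intro I hI
    simp only [mem_filter, mem_univ, true_and] at hI ⊢
    exact fun y z hzy hy => mem_subtype.2 (hI.1 hzy (mem_subtype.1 hy))
  · intro I hI
    simp only [mem_filter, mem_univ, true_and] at hI
    exact subtype_map_of_mem fun y hy => hI.2 hy

theorem sum_lowerSets_superset_compl {U : Set α} [Fintype U] (hU : IsUpperSet U) :
    ∑ I ∈ univ.filter (fun I : Finset α => IsLowerSet (I : Set α) ∧ ∀ y ∉ U, y ∈ I), t ^ #I =
      t ^ #{y | y ∉ U} * lowerSetGF t U := by
  rw [lowerSetGF, mul_sum]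
  symm
  refine sum_nbij' (fun J => ({y | y ∉ U} : Finset α) ∪ J.map (Function.Embedding.subtype _))
    (fun I => I.subtype (· ∈ U)) ?_ ?_ (fun J _ => by ext; simp) ?_ ?_
  · intro J hJ
    simp only [coe_union, coe_map, coe_filter, mem_filter, mem_univ, true_and] at hJ ⊢
    refine ⟨?_, fun y hy => mem_union_left _ (by simpa using hy)⟩
    rintro y z hzy (hy | ⟨y', hy', rfl⟩)
    · exact Or.inl fun hz => hy (hU hzy hz)
    · by_cases hz : z ∈ U
      · exact Or.inr ⟨⟨z, hz⟩, hJ hzy hy', rfl⟩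
      · exact Or.inl hz
  · intro I hI
    simp only [mem_filter, mem_univ, true_and] at hI ⊢
    exact fun y z hzy hy => mem_subtype.2 (hI.1 hzy (mem_subtype.1 hy))
  · intro I hI
    simp only [mem_filter, mem_univ, true_and] at hI
    ext y
    by_cases hy : y ∈ U <;> simp [hy, hI.2]
  · intro J _
    rw [card_union_of_disjoint (disjoint_left.2 fun y hy hy' => by simp_all), card_map, pow_add]

theorem lowerSetGF_eq_add [DecidableLE α] (x : α) [Fintype ↥(Set.Ici x)ᶜ]
    [Fintype ↥(Set.Iic x)ᶜ] :
    lowerSetGF t α =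
      lowerSetGF t ↥(Set.Ici x)ᶜ + t ^ #{y | y ≤ x} * lowerSetGF t ↥(Set.Iic x)ᶜ := by
  rw [lowerSetGF, ← sum_filter_not_add_sum_filter _ (fun I => x ∈ I), filter_filter,
    filter_filter, ← sum_lowerSets_subset t (isUpperSet_Ici x).compl]
  congr 1
  · refine sum_congr (filter_congr fun I _ => ?_) fun _ _ => rfl
    refine and_congr_right fun hI => ?_
    exact ⟨fun hx y hy hxy => hx (hI hxy hy), fun h hx => h hx le_rfl⟩
  · convert sum_lowerSets_superset_compl t (isLowerSet_Iic x).compl using 3 with I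
    · refine and_congr_right fun hI => ?_
      simp only [Set.mem_compl_iff, Set.mem_Iic, not_not]
      exact ⟨fun hx y hyx => hI hyx hx, fun h => h x le_rfl⟩
    · simp

end LowerSetGF

section Chains

variable {R : Type*} {p q : ℕ}

theorem mem_compl_Ici_last_zero {y : Fin (p + 1) × Fin (q + 1)} :
    y ∈ (Set.Ici (Fin.last p, 0))ᶜ ↔ y.1 ≠ Fin.last p := by
  simp [Prod.le_def, Fin.last_le_iff]

theorem mem_compl_Iic_last_zero {y : Fin (p + 1) × Fin (q + 1)} :
    y ∈ (Set.Iic (Fin.last p, 0))ᶜ ↔ y.2 ≠ 0 := by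
  simp [Prod.le_def, Fin.le_last]

variable (p q)

def complIciLastZeroOrderIso :
    ↥(Set.Ici ((Fin.last p, 0) : Fin (p + 1) × Fin (q + 1)))ᶜ ≃o Fin p × Fin (q + 1) where
  toFun y := ((y : Fin (p + 1) × Fin (q + 1)).1.castPred (mem_compl_Ici_last_zero.1 y.2), y.1.2)
  invFun z := ⟨(z.1.castSucc, z.2), mem_compl_Ici_last_zero.2 (Fin.castSucc_ne_last _)⟩
  left_inv y := by simp
  right_inv z := by simp
  map_rel_iff' := by simp [Prod.le_def, Subtype.mk_le_mk]

def complIicLastZeroOrderIso :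
    ↥(Set.Iic ((Fin.last p, 0) : Fin (p + 1) × Fin (q + 1)))ᶜ ≃o Fin (p + 1) × Fin q where
  toFun y := (y.1.1, (y : Fin (p + 1) × Fin (q + 1)).2.pred (mem_compl_Iic_last_zero.1 y.2))
  invFun z := ⟨(z.1, z.2.succ), mem_compl_Iic_last_zero.2 (Fin.succ_ne_zero _)⟩
  left_inv y := by simp
  right_inv z := by simp
  map_rel_iff' := by simp [Prod.le_def, Subtype.mk_le_mk]

theorem card_le_last_zero : #{y : Fin (p + 1) × Fin (q + 1) | y ≤ (Fin.last p, 0)} = p + 1 := by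
  have : ({y | y ≤ (Fin.last p, 0)} : Finset (Fin (p + 1) × Fin (q + 1))) = univ ×ˢ {0} := by
    ext ⟨a, b⟩
    simp [Prod.le_def, Fin.le_last, eq_comm]
  simp [this]

theorem lowerSetGF_fin_prod_succ_succ [CommSemiring R] (t : R) :
    lowerSetGF t (Fin (p + 1) × Fin (q + 1)) =
      lowerSetGF t (Fin p × Fin (q + 1)) + t ^ (p + 1) * lowerSetGF t (Fin (p + 1) × Fin q) := by
  rw [lowerSetGF_eq_add t (Fin.last p, 0), lowerSetGF_congr t (complIciLastZeroOrderIso p q),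
    lowerSetGF_congr t (complIicLastZeroOrderIso p q), card_le_last_zero]

theorem lowerSetGF_fin_prod_mul_prod [CommRing R] (t : R) :
    lowerSetGF t (Fin p × Fin q) * ∏ k ∈ range q, (1 - t ^ (k + 1)) =
      ∏ k ∈ range q, (1 - t ^ (p + k + 1)) := by
  induction p generalizing q with
  | zero => simp [lowerSetGF_of_isEmpty]
  | succ p ihp =>
    induction q with
    | zero => simp [lowerSetGF_of_isEmpty]
    | succ q ihq =>
      have hshift : ∏ k ∈ range (q + 1), (1 - t ^ (p + k + 1)) =
          (∏ k ∈ range q, (1 - t ^ (p + 1 + k + 1))) * (1 - t ^ (p + 1)) := by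
        rw [prod_range_succ']
        exact congrArg₂ _ (prod_congr rfl fun k _ => by ring_nf) (by ring_nf)
      have hrow := ihp (q + 1)
      rw [hshift, prod_range_succ] at hrow
      rw [lowerSetGF_fin_prod_succ_succ, prod_range_succ, prod_range_succ]
      linear_combination hrow + t ^ (p + 1) * (1 - t ^ (q + 1)) * ihq

theorem prod_range_one_sub_pow_mul [CommRing R] (t : R) (n b : ℕ) :
    (∏ a ∈ range n, (1 - t ^ (a + b + 2))) * (1 - t ^ (b + 1)) =
      (∏ a ∈ range n, (1 - t ^ (a + b + 1))) * (1 - t ^ (n + b + 1)) := by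
  rw [← prod_range_succ (fun a => 1 - t ^ (a + b + 1)), prod_range_succ']
  exact congrArg₂ _ (prod_congr rfl fun a _ => by ring_nf) (by ring_nf)

theorem prod_fin_prod_eq_prod_range [CommMonoid R] (f : ℕ → ℕ → R) :
    ∏ x : Fin p × Fin q, f x.1 x.2 = ∏ b ∈ range q, ∏ a ∈ range p, f a b := by
  rw [Fintype.prod_prod_type, prod_comm, ← Fin.prod_univ_eq_prod_range]
  exact prod_congr rfl fun b _ => Fin.prod_univ_eq_prod_range (f · b) p

end Chains

theorem one_sub_X_pow_succ_ne_zero (k : ℕ) : (1 - X ^ (k + 1) : ℤ[X]) ≠ 0 := by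
  rw [← neg_ne_zero, neg_sub, ← C_1]
  exact X_pow_sub_C_ne_zero k.succ_pos 1

open Polynomial in
open scoped Classical in
/-- The product of chains `[p] × [q]` is pleasant: its lower-ideal generating function
satisfies `𝓜(t) = ∏_{(a,b)} (1 - t^{ht(a,b)+1}) / (1 - t^{ht(a,b)})`, where
`ht(a,b) = a + b - 1` (1-based), stated here with denominators cleared in `ℤ[t]`. -/
theorem M_poly_prod_chains (p q : ℕ) :
    (∑ I ∈ Finset.univ.filter
        (fun I : Finset (Fin p × Fin q) => IsLowerSet (I : Set (Fin p × Fin q))),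
        (X : ℤ[X]) ^ I.card) *
      (∏ x : Fin p × Fin q, (1 - (X : ℤ[X]) ^ (x.1.val + x.2.val + 1))) =
    ∏ x : Fin p × Fin q, (1 - (X : ℤ[X]) ^ (x.1.val + x.2.val + 2)) := by
  change lowerSetGF X (Fin p × Fin q) * _ = _
  have hcolumns : (∏ x : Fin p × Fin q, (1 - (X : ℤ[X]) ^ (x.1.val + x.2.val + 2))) *
      ∏ k ∈ range q, (1 - X ^ (k + 1)) =
      (∏ x : Fin p × Fin q, (1 - (X : ℤ[X]) ^ (x.1.val + x.2.val + 1))) *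
      ∏ k ∈ range q, (1 - X ^ (p + k + 1)) := by
    rw [prod_fin_prod_eq_prod_range p q (fun a b => 1 - (X : ℤ[X]) ^ (a + b + 2)),
      prod_fin_prod_eq_prod_range p q (fun a b => 1 - (X : ℤ[X]) ^ (a + b + 1)),
      ← prod_mul_distrib, ← prod_mul_distrib]
    exact prod_congr rfl fun b _ => prod_range_one_sub_pow_mul X p b
  refine mul_right_cancel₀ (b := ∏ k ∈ range q, (1 - X ^ (k + 1)))
    (prod_ne_zero_iff.2 fun k _ => one_sub_X_pow_succ_ne_zero k) ?_
  rw [hcolumns, ← lowerSetGF_fin_prod_mul_prod]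
  ring
end

section
/- The number of antichains of size i in the poset [2n+1] × K_n satisfies A(i) = A(2n+2-i) for all 1 ≤ i ≤ 2n+1; that is, the antichain generating polynomial 𝒩_{[2n+1]×K_n}(t) is palindromic of degree 2n+2. -/
/-- The poset `K_n = [n] ⊕ ([1] ⊔ [1]) ⊕ [n]`. -/
abbrev K (n : ℕ) : Type := Fin n ⊕ₗ ((Fin 1 ⊕ Fin 1) ⊕ₗ Fin n)

instance (n : ℕ) : Fintype (K n) :=
  inferInstanceAs (Fintype (Fin n ⊕ ((Fin 1 ⊕ Fin 1) ⊕ Fin n)))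

/-!
An antichain of `γ × P`, with `γ` a chain, is the graph of a partial map `f : P → γ` that is
strictly antitone on its domain. When `P` is a chain too, such a map is determined by its domain
and its range, so there are `C(|P|, s) * C(|γ|, s)` of them with domain of size `s`.

In `K_n` the two middle points `x` and `y` are incomparable twins (same strict lower and upper
sets). The partial maps on `K_n` split into three classes: `f y < f x` whenever both are defined
(these are the maps on the linear extension of `K_n` with `x < y`), `f x < f y` (sent to the first
class by the swap of `x` and `y`), and `f x = f y` (forget the value at `y`). For `|γ| = 2n+1`,
Pascal's rule turns the resulting count into
  `A(i) = C(2n+2, i) * #{D ⊆ K_n : |D| = i, x ∈ D → y ∈ D}`,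
and `D ↦ swap (Dᶜ)` shows that the second factor, like the first, is invariant under
`i ↦ 2n+2-i`.
-/

open Finset

section PartialMap
variable {α β : Type*}

def StrictAntiPartial [Preorder α] [Preorder β] (f : α → Option β) : Prop :=
  ∀ ⦃a b : α⦄, a < b → ∀ u ∈ f a, ∀ v ∈ f b, v < u

lemma StrictAntiPartial.comp_strictMono {γ : Type*} [Preorder α] [Preorder β] [Preorder γ]
    {f : β → Option γ} (hf : StrictAntiPartial f) {e : α → β} (he : StrictMono e) :
    StrictAntiPartial (f ∘ e) :=
  fun _ _ hab => hf (he hab)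

section Update
variable [Preorder α] [DecidableEq α] [Preorder β] {a b : α}

lemma StrictAntiPartial.update_none {f : α → Option β} (hf : StrictAntiPartial f) :
    StrictAntiPartial (Function.update f b none) := by
  intro c d hcd u hu v hv
  rw [Function.update_apply] at hu hv
  split_ifs at hu hv
  all_goals first | exact hf hcd u hu v hv | simp at hu hv

lemma StrictAntiPartial.update_twin {g : α → Option β} (hg : StrictAntiPartial g)
    (hlt : ∀ c, c < a ↔ c < b) (hgt : ∀ c, a < c ↔ b < c) :
    StrictAntiPartial (Function.update g b (g a)) := by
  intro c d hcd u hu v hv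
  by_cases hc : c = b <;> by_cases hd : d = b
  · exact absurd hcd (by rw [hc, hd]; exact lt_irrefl b)
  · rw [hc, Function.update_self] at hu
    rw [Function.update_of_ne hd] at hv
    exact hg ((hgt d).2 (hc ▸ hcd)) u hu v hv
  · rw [hd, Function.update_self] at hv
    rw [Function.update_of_ne hc] at hu
    exact hg ((hlt c).2 (hd ▸ hcd)) u hu v hv
  · rw [Function.update_of_ne hc] at hu
    rw [Function.update_of_ne hd] at hv
    exact hg hcd u hu v hv

lemma strictMono_swap_of_twins (hlt : ∀ c, c < a ↔ c < b) (hgt : ∀ c, a < c ↔ b < c) :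
    StrictMono (Equiv.swap a b) := by
  intro c d hcd
  simp only [Equiv.swap_apply_def]
  split_ifs <;> subst_vars <;> simp_all

end Update

variable [Fintype α]

def pdom (f : α → Option β) : Finset α := {a | (f a).isSome}

def pran [DecidableEq β] (f : α → Option β) : Finset β := (univ.image f).eraseNone

@[simp] lemma mem_pdom {f : α → Option β} {a : α} : a ∈ pdom f ↔ (f a).isSome := by
  simp [pdom]

@[simp] lemma mem_pran [DecidableEq β] {f : α → Option β} {b : β} :
    b ∈ pran f ↔ ∃ a, f a = some b := by
  simp [pran]

lemma range_get_eq_pran [DecidableEq β] {D : Finset α} (f : α → Option β) (hD : pdom f = D) :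
    Set.range (fun a : D => (f a).get (mem_pdom.1 (hD ▸ a.2))) = pran f := by
  ext u
  simp only [Set.mem_range, mem_coe, mem_pran]
  constructor
  · rintro ⟨a, rfl⟩
    exact ⟨a, (Option.some_get _).symm⟩
  · rintro ⟨a, ha⟩
    exact ⟨⟨a, hD ▸ mem_pdom.2 (by simp [ha])⟩, by simp [ha]⟩

lemma card_pdom_comp_equiv {α' : Type*} [Fintype α'] (f : α → Option β) (e : α' ≃ α) :
    #(pdom (f ∘ e)) = #(pdom f) :=
  card_equiv e (by simp)

lemma pdom_comp_symm {α' : Type*} [Fintype α'] (f : α → Option β) (e : α ≃ α') :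
    pdom (f ∘ e.symm) = (pdom f).map e.toEmbedding := by
  ext b; simp [Finset.mem_map_equiv]

variable [DecidableEq α]

lemma pdom_update_none (f : α → Option β) (a : α) :
    pdom (Function.update f a none) = (pdom f).erase a := by
  ext c; by_cases h : c = a <;> simp [h]

lemma pdom_update_some (f : α → Option β) (a : α) (u : β) :
    pdom (Function.update f a (some u)) = insert a (pdom f) := by
  ext c; by_cases h : c = a <;> simp [h]

end PartialMap

section Graph
variable {α γ : Type*} [Fintype α] [Fintype γ]

def partialGraph [DecidableEq γ] (f : α → Option γ) : Finset (γ × α) := {p | f p.2 = some p.1}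

@[simp] lemma mem_partialGraph [DecidableEq γ] {f : α → Option γ} {p : γ × α} :
    p ∈ partialGraph f ↔ f p.2 = some p.1 := by
  simp [partialGraph]

lemma partialGraph_injective [DecidableEq γ] :
    Function.Injective (partialGraph (α := α) (γ := γ)) := by
  intro f g h
  funext a
  refine Option.ext fun c => ?_
  simpa using congrArg (fun A => (c, a) ∈ A) h

lemma card_partialGraph [DecidableEq γ] (f : α → Option γ) : #(partialGraph f) = #(pdom f) := by
  refine card_nbij Prod.snd (fun p hp => ?_) (fun p hp q hq hpq => ?_) (fun a ha => ?_)
  · simp_all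
  · simp only [mem_coe, mem_partialGraph] at hp hq
    exact Prod.ext (Option.some_injective _ (hp.symm.trans (hpq ▸ hq))) hpq
  · exact ⟨((f a).get (mem_pdom.1 ha), a), by simp, rfl⟩

variable [PartialOrder α] [LinearOrder γ]

lemma isAntichain_partialGraph_iff {f : α → Option γ} :
    IsAntichain (· ≤ ·) (partialGraph f : Set (γ × α)) ↔ StrictAntiPartial f := by
  constructor
  · intro hA a b hab u hu v hv
    by_contra! huv
    exact hA (show (u, a) ∈ partialGraph f by simpa using hu)
      (show (v, b) ∈ partialGraph f by simpa using hv) (by simp [hab.ne]) ⟨huv, hab.le⟩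
  · rintro hf ⟨c, a⟩ hp ⟨c', a'⟩ hp' hne ⟨hc, ha⟩
    simp only [mem_coe, mem_partialGraph] at hp hp'
    rcases ha.eq_or_lt with rfl | ha
    · exact hne (by simp_all)
    · exact (hf ha c hp c' hp').not_ge hc

lemma exists_partialGraph_eq {A : Finset (γ × α)} (hA : IsAntichain (· ≤ ·) (A : Set (γ × α))) :
    ∃ f : α → Option γ, partialGraph f = A := by
  have (a : α) : ∃ o : Option γ, ∀ c, o = some c ↔ (c, a) ∈ A := by
    by_cases h : ∃ c, (c, a) ∈ A
    · obtain ⟨c, hc⟩ := h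
      refine ⟨some c, fun c' => ⟨?_, fun hc' => ?_⟩⟩
      · rintro ⟨⟩; exact hc
      · rcases le_total c c' with hle | hle
        · exact congrArg some (congrArg Prod.fst (hA.eq hc hc' ⟨hle, le_rfl⟩))
        · exact congrArg some (congrArg Prod.fst (hA.eq hc' hc ⟨hle, le_rfl⟩)).symm
    · exact ⟨none, fun c => by simpa using fun hc => h ⟨c, hc⟩⟩
  choose f hf using this
  exact ⟨f, by ext ⟨c, a⟩; simp [hf]⟩

theorem card_antichains_eq_card_strictAntiPartial (s : ℕ) :
    Nat.card {A : Finset (γ × α) // IsAntichain (· ≤ ·) (A : Set (γ × α)) ∧ #A = s} =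
      Nat.card {f : α → Option γ // StrictAntiPartial f ∧ #(pdom f) = s} := by
  symm
  refine Nat.card_eq_of_bijective
    (fun f => ⟨partialGraph f.1, isAntichain_partialGraph_iff.2 f.2.1,
      (card_partialGraph _).trans f.2.2⟩) ⟨fun f g h => ?_, fun A => ?_⟩
  · exact Subtype.ext (partialGraph_injective (congrArg Subtype.val h))
  · obtain ⟨f, hf⟩ := exists_partialGraph_eq A.2.1
    refine ⟨⟨f, ?_, ?_⟩, Subtype.ext hf⟩
    · rw [← isAntichain_partialGraph_iff, hf]; exact A.2.1
    · rw [← card_partialGraph, hf, A.2.2]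

end Graph

section Linear
variable {α β : Type*} [LinearOrder α] [LinearOrder β]

lemma StrictAntiPartial.eq_of_mem {f : α → Option β} (hf : StrictAntiPartial f)
    {a b : α} {u : β} (ha : u ∈ f a) (hb : u ∈ f b) : a = b := by
  by_contra hab
  rcases lt_or_gt_of_ne hab with h | h
  · exact (hf h u ha u hb).false
  · exact (hf h u hb u ha).false

def ofPdomPran (D : Finset α) (V : Finset β) (h : #V = #D) : α → Option β := fun a =>
  if ha : a ∈ D then some (V.orderEmbOfFin h ((D.orderIsoOfFin rfl).symm ⟨a, ha⟩).rev) else none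

lemma strictAntiPartial_ofPdomPran {D : Finset α} {V : Finset β} {h : #V = #D} :
    StrictAntiPartial (ofPdomPran D V h) := by
  intro a b hab u hu v hv
  simp only [ofPdomPran] at hu hv
  split_ifs at hu hv <;> simp only [Option.mem_def, Option.some_inj, reduceCtorEq] at hu hv
  subst hu hv
  exact (V.orderEmbOfFin h).strictMono (Fin.rev_lt_rev.2 ((D.orderIsoOfFin rfl).symm.strictMono hab))

variable [Fintype α]

lemma card_pran {f : α → Option β} (hf : StrictAntiPartial f) : #(pran f) = #(pdom f) := by
  refine (card_bij (fun a ha => (f a).get (mem_pdom.1 ha)) (fun a ha => ?_)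
    (fun a ha b hb hab => ?_) (fun u hu => ?_)).symm
  · exact mem_pran.2 ⟨a, (Option.some_get _).symm⟩
  · exact hf.eq_of_mem (Option.get_mem _) (by rw [hab]; exact Option.get_mem _)
  · obtain ⟨a, ha⟩ := mem_pran.1 hu
    exact ⟨a, by simp [ha], by simp [ha]⟩

lemma StrictAntiPartial.eq_of_pdom_eq_of_pran_eq {f g : α → Option β}
    (hf : StrictAntiPartial f) (hg : StrictAntiPartial g) (hdom : pdom f = pdom g)
    (hran : pran f = pran g) : f = g := by
  let F : pdom f → β := fun a => (f a).get (mem_pdom.1 a.2)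
  let G : pdom f → β := fun a => (g a).get (mem_pdom.1 (hdom ▸ a.2))
  have hF : StrictAnti F := fun a b hab => hf hab _ (Option.get_mem _) _ (Option.get_mem _)
  have hG : StrictAnti G := fun a b hab => hg hab _ (Option.get_mem _) _ (Option.get_mem _)
  have hFG : F = G := (hF.range_inj hG).1 <| by
    rw [range_get_eq_pran f rfl, range_get_eq_pran g hdom.symm, hran]
  funext a
  by_cases ha : a ∈ pdom f
  · calc f a = some (F ⟨a, ha⟩) := (Option.some_get _).symm
      _ = some (G ⟨a, ha⟩) := by rw [hFG]
      _ = g a := Option.some_get _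
  · have hb : a ∉ pdom g := hdom ▸ ha
    simp only [mem_pdom, Option.not_isSome_iff_eq_none] at ha hb
    rw [ha, hb]

lemma pdom_ofPdomPran {D : Finset α} {V : Finset β} {h : #V = #D} :
    pdom (ofPdomPran D V h) = D := by
  ext a
  by_cases ha : a ∈ D <;> simp [ofPdomPran, ha]

lemma pran_ofPdomPran {D : Finset α} {V : Finset β} {h : #V = #D} :
    pran (ofPdomPran D V h) = V := by
  ext u
  simp only [mem_pran, ofPdomPran]
  constructor
  · rintro ⟨a, ha⟩
    split_ifs at ha
    exact Option.some_injective _ ha ▸ V.orderEmbOfFin_mem h _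
  · intro hu
    obtain ⟨k, rfl⟩ : u ∈ Set.range (V.orderEmbOfFin h) := by simpa using hu
    refine ⟨D.orderEmbOfFin rfl k.rev, ?_⟩
    have hk : (⟨D.orderEmbOfFin rfl k.rev, D.orderEmbOfFin_mem rfl _⟩ : D) =
        D.orderIsoOfFin rfl k.rev := Subtype.ext (D.coe_orderIsoOfFin_apply rfl _).symm
    rw [dif_pos (D.orderEmbOfFin_mem rfl _), hk, OrderIso.symm_apply_apply, Fin.rev_rev]

theorem card_strictAntiPartial [Fintype β] (s : ℕ) (P : Finset α → Prop) :
    Nat.card {f : α → Option β // StrictAntiPartial f ∧ #(pdom f) = s ∧ P (pdom f)} =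
      Nat.card {D : Finset α // #D = s ∧ P D} * (Fintype.card β).choose s := by
  rw [← Fintype.card_finset_len, ← Nat.card_eq_fintype_card, ← Nat.card_prod]
  refine Nat.card_eq_of_bijective (fun f => (⟨pdom f.1, f.2.2⟩, ⟨pran f.1, ?_⟩))
    ⟨fun f g hfg => ?_, fun ⟨D, V⟩ => ?_⟩
  · rw [card_pran f.2.1, f.2.2.1]
  · simp only [Prod.mk.injEq, Subtype.mk.injEq] at hfg
    exact Subtype.ext (f.2.1.eq_of_pdom_eq_of_pran_eq g.2.1 hfg.1 hfg.2)
  · have h : #V.1 = #D.1 := V.2.trans D.2.1.symm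
    refine ⟨⟨ofPdomPran D.1 V.1 h, strictAntiPartial_ofPdomPran, ?_⟩, ?_⟩
    · rw [pdom_ofPdomPran]; exact D.2
    · simp only [pdom_ofPdomPran, pran_ofPdomPran]

end Linear

namespace Option
variable {γ : Type*} [LinearOrder γ]

lemma exists_mem_lt_iff {o o' : Option γ} :
    (∃ u ∈ o, ∃ v ∈ o', u < v) ↔ (o.isSome ∧ o'.isSome) ∧ ∀ u ∈ o', ∀ v ∈ o, v < u := by
  cases o <;> cases o' <;> simp

lemma lt_trichotomy_mem (o o' : Option γ) :
    (∀ u ∈ o, ∀ v ∈ o', v < u) ∨ (∃ u ∈ o, ∃ v ∈ o', u < v) ∨ (o.isSome ∧ o = o') := by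
  cases o with
  | none => simp
  | some u =>
    cases o' with
    | none => simp
    | some v => rcases lt_trichotomy u v with h | h | h <;> simp [h]

end Option

lemma Nat.card_subtype_or_of_imp_not {X : Type*} [Finite X] {p q : X → Prop}
    (h : ∀ x, p x → ¬ q x) :
    Nat.card {x // p x ∨ q x} = Nat.card {x // p x} + Nat.card {x // q x} := by
  have := Fintype.ofFinite X
  classical
  simpa only [Nat.card_eq_fintype_card] using
    Fintype.card_subtype_or_disjoint p q (disjoint_iff_inf_le.2 fun x hx => h x hx.1 hx.2)

section Finsets
variable {α : Type*} [DecidableEq α]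

lemma card_finset_len_succ_mem_mem (s : ℕ) {a b : α} (hab : a ≠ b) :
    Nat.card {D : Finset α // #D = s + 1 ∧ a ∈ D ∧ b ∈ D} =
      Nat.card {D : Finset α // #D = s ∧ a ∈ D ∧ b ∉ D} :=
  Nat.card_congr
    { toFun D := ⟨D.1.erase b, by simp [card_erase_of_mem D.2.2.2, D.2.1, D.2.2.1, hab]⟩
      invFun D := ⟨insert b D.1, by simp [card_insert_of_notMem D.2.2.2, D.2.1, D.2.2.1]⟩
      left_inv D := Subtype.ext (insert_erase D.2.2.2)
      right_inv D := Subtype.ext (erase_insert D.2.2.2) }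

variable [Fintype α]

lemma card_finset_len_notMem (a : α) (s : ℕ) :
    Nat.card {D : Finset α // #D = s ∧ a ∉ D} = (Fintype.card α - 1).choose s := by
  rw [← card_univ, ← card_erase_of_mem (mem_univ a), ← card_powersetCard,
    ← Nat.card_eq_finsetCard]
  exact Nat.card_congr (Equiv.subtypeEquivRight fun D => by
    simp [mem_powersetCard, subset_erase, and_comm])

lemma card_finset_len_imp_eq_add (i : ℕ) (a b : α) :
    Nat.card {D : Finset α // #D = i ∧ (a ∈ D → b ∈ D)} =
      Nat.card {D : Finset α // #D = i ∧ a ∉ D} +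
        Nat.card {D : Finset α // #D = i ∧ a ∈ D ∧ b ∈ D} := by
  rw [← Nat.card_subtype_or_of_imp_not (by tauto)]
  exact Nat.card_congr (Equiv.subtypeEquivRight fun D => by tauto)

lemma card_finset_len_imp_compl (i : ℕ) (hi : i ≤ Fintype.card α) (a b : α) :
    Nat.card {D : Finset α // #D = i ∧ (a ∈ D → b ∈ D)} =
      Nat.card {D : Finset α // #D = Fintype.card α - i ∧ (a ∈ D → b ∈ D)} := by
  refine Nat.card_congr (Equiv.subtypeEquiv
    ((compl_involutive.toPerm _).trans (Equiv.swap a b).finsetCongr) fun D => ?_)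
  have hD := card_le_univ D
  simp only [Equiv.trans_apply, Function.Involutive.coe_toPerm, Equiv.finsetCongr_apply,
    card_map, card_compl, mem_map_equiv, Equiv.symm_swap, Equiv.swap_apply_left,
    Equiv.swap_apply_right, mem_compl]
  constructor
  · rintro ⟨rfl, h⟩
    exact ⟨rfl, mt h⟩
  · rintro ⟨h, h'⟩
    exact ⟨by omega, not_imp_not.1 h'⟩

end Finsets

namespace K
open Sum
variable {n : ℕ}

def x (n : ℕ) : K n := toLex (inr (toLex (inl (inl 0))))
def y (n : ℕ) : K n := toLex (inr (toLex (inl (inr 0))))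

@[elab_as_elim]
lemma induction {P : K n → Prop} (left : ∀ i, P (toLex (inl i))) (hx : P (x n)) (hy : P (y n))
    (right : ∀ j, P (toLex (inr (toLex (inr j))))) (c : K n) : P c := by
  rcases c with i | (t | t) | j
  · exact left i
  · rwa [Fin.fin_one_eq_zero t]
  · rwa [Fin.fin_one_eq_zero t]
  · exact right j

lemma lt_x_iff_lt_y (c : K n) : c < x n ↔ c < y n := by
  induction c using induction <;> simp [x, y]

lemma x_lt_iff_y_lt (c : K n) : x n < c ↔ y n < c := by
  induction c using induction <;> simp [x, y]

lemma x_ne_y : x n ≠ y n := by simp [x, y]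

lemma card_eq : Fintype.card (K n) = 2 * n + 2 := by
  change Fintype.card (Fin n ⊕ ((Fin 1 ⊕ Fin 1) ⊕ Fin n)) = _
  simp; omega

/-- The linear extension of `K n` in which `x < y`. -/
abbrev Lin (n : ℕ) : Type := Fin n ⊕ₗ ((Fin 1 ⊕ₗ Fin 1) ⊕ₗ Fin n)

def toLin : K n ≃ Lin n := Equiv.refl _

lemma toLin_inl (i : Fin n) : toLin (toLex (inl i) : K n) = toLex (inl i) := rfl
lemma toLin_x : toLin (x n) = toLex (inr (toLex (inl (toLex (inl 0))))) := rfl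
lemma toLin_y : toLin (y n) = toLex (inr (toLex (inl (toLex (inr 0))))) := rfl
lemma toLin_inr (j : Fin n) :
    toLin (toLex (inr (toLex (inr j))) : K n) = toLex (inr (toLex (inr j))) := rfl

lemma toLin_lt_toLin_iff {a b : K n} : toLin a < toLin b ↔ a < b ∨ (a = x n ∧ b = y n) := by
  induction a using induction <;> induction b using induction <;>
    simp only [toLin_inl, toLin_x, toLin_y, toLin_inr] <;> simp [x, y]

variable {γ : Type*} [LinearOrder γ]

lemma strictAntiPartial_comp_toLin_symm_iff {f : K n → Option γ} :
    StrictAntiPartial (f ∘ toLin.symm) ↔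
      StrictAntiPartial f ∧ ∀ u ∈ f (x n), ∀ v ∈ f (y n), v < u := by
  constructor
  · intro h
    refine ⟨fun a b hab => h (toLin_lt_toLin_iff.2 (Or.inl hab)), ?_⟩
    exact h (toLin_lt_toLin_iff.2 (Or.inr ⟨rfl, rfl⟩))
  · rintro ⟨hf, hxy⟩ a b hab
    obtain ⟨a, rfl⟩ := toLin.surjective a
    obtain ⟨b, rfl⟩ := toLin.surjective b
    simp only [Function.comp_apply, Equiv.symm_apply_apply]
    rcases toLin_lt_toLin_iff.1 hab with hab | ⟨rfl, rfl⟩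
    · exact hf hab
    · exact hxy

variable [Fintype γ]

lemma card_strictAntiPartial_of_x_gt_y (s : ℕ) (P : Finset (K n) → Prop) :
    Nat.card {f : K n → Option γ // (StrictAntiPartial f ∧ ∀ u ∈ f (x n), ∀ v ∈ f (y n), v < u) ∧
        #(pdom f) = s ∧ P (pdom f)} =
      Nat.card {D : Finset (K n) // #D = s ∧ P D} * (Fintype.card γ).choose s := by
  have hP (f : K n → Option γ) :
      P (pdom f) ↔ P ((pdom (f ∘ toLin.symm)).map toLin.symm.toEmbedding) := by
    rw [pdom_comp_symm, Finset.map_map,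
      Function.Embedding.equiv_toEmbedding_trans_symm_toEmbedding, map_refl]
  calc _ = Nat.card {g : Lin n → Option γ // StrictAntiPartial g ∧ #(pdom g) = s ∧
        P ((pdom g).map toLin.symm.toEmbedding)} := by
        refine Nat.card_congr (Equiv.subtypeEquiv (toLin.arrowCongr (Equiv.refl _)) fun f => ?_)
        rw [show toLin.arrowCongr (Equiv.refl (Option γ)) f = f ∘ toLin.symm from rfl,
          strictAntiPartial_comp_toLin_symm_iff, card_pdom_comp_equiv, hP]
    _ = Nat.card {D : Finset (Lin n) // #D = s ∧ P (D.map toLin.symm.toEmbedding)} *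
        (Fintype.card γ).choose s :=
        card_strictAntiPartial s (fun D => P (D.map toLin.symm.toEmbedding))
    _ = _ := by
        congr 1
        exact Nat.card_congr (Equiv.subtypeEquiv toLin.symm.finsetCongr fun D => by
          rw [Equiv.finsetCongr_apply, card_map])

lemma card_strictAntiPartial_of_x_lt_y (s : ℕ) :
    Nat.card {f : K n → Option γ //
        StrictAntiPartial f ∧ (∃ u ∈ f (x n), ∃ v ∈ f (y n), u < v) ∧ #(pdom f) = s} =
      Nat.card {D : Finset (K n) // #D = s ∧ x n ∈ D ∧ y n ∈ D} * (Fintype.card γ).choose s := by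
  have hswap : StrictMono (Equiv.swap (x n) (y n)) :=
    strictMono_swap_of_twins lt_x_iff_lt_y x_lt_iff_y_lt
  rw [← card_strictAntiPartial_of_x_gt_y]
  refine Nat.card_congr (Equiv.subtypeEquiv ((Equiv.swap (x n) (y n)).arrowCongr (Equiv.refl _))
    fun f => ?_)
  rw [show (Equiv.swap (x n) (y n)).arrowCongr (Equiv.refl (Option γ)) f =
    f ∘ Equiv.swap (x n) (y n) from rfl]
  have hsap : StrictAntiPartial (f ∘ Equiv.swap (x n) (y n)) ↔ StrictAntiPartial f := by
    refine ⟨fun h => ?_, fun h => h.comp_strictMono hswap⟩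
    simpa [Function.comp_def] using h.comp_strictMono hswap
  simp only [hsap, Option.exists_mem_lt_iff, card_pdom_comp_equiv, mem_pdom, Function.comp_apply,
    Equiv.swap_apply_left, Equiv.swap_apply_right]
  tauto

lemma card_strictAntiPartial_of_x_eq_y (s : ℕ) :
    Nat.card {f : K n → Option γ //
        StrictAntiPartial f ∧ ((f (x n)).isSome ∧ f (x n) = f (y n)) ∧ #(pdom f) = s + 1} =
      Nat.card {D : Finset (K n) // #D = s ∧ x n ∈ D ∧ y n ∉ D} * (Fintype.card γ).choose s := by
  rw [← card_strictAntiPartial_of_x_gt_y]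
  have hxy : x n ≠ y n := x_ne_y
  refine Nat.card_congr
    { toFun f := ⟨Function.update f.1 (y n) none, ?_⟩
      invFun g := ⟨Function.update g.1 (y n) (g.1 (x n)), ?_⟩
      left_inv f := ?_
      right_inv g := ?_ }
  · obtain ⟨f, hf, ⟨hx, hfxy⟩, hcard⟩ := f
    have hy : y n ∈ pdom f := by simpa [← hfxy] using hx
    refine ⟨⟨hf.update_none, by simp⟩, ?_, ?_⟩
    · rw [pdom_update_none, card_erase_of_mem hy, hcard, Nat.add_sub_cancel]
    · simpa [pdom_update_none, hxy] using hx
  · obtain ⟨g, ⟨hg, -⟩, hcard, hx, hy⟩ := g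
    obtain ⟨u, hu⟩ := Option.isSome_iff_exists.1 (mem_pdom.1 hx)
    refine ⟨hg.update_twin lt_x_iff_lt_y x_lt_iff_y_lt, ?_, ?_⟩
    · simp [Function.update_of_ne hxy, hu]
    · change #(pdom (Function.update g (y n) (g (x n)))) = s + 1
      rw [hu, pdom_update_some, card_insert_of_notMem hy, hcard]
  · obtain ⟨f, hf, ⟨hx, hfxy⟩, hcard⟩ := f
    ext1
    simp [Function.update_of_ne hxy, hfxy]
  · obtain ⟨g, ⟨hg, -⟩, hcard, hx, hy⟩ := g
    ext1
    simp only [mem_pdom, Option.not_isSome_iff_eq_none] at hy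
    simp [← hy]

lemma card_strictAntiPartial_eq_add (s : ℕ) :
    Nat.card {f : K n → Option γ // StrictAntiPartial f ∧ #(pdom f) = s} =
      Nat.card {f : K n → Option γ // (StrictAntiPartial f ∧
          ∀ u ∈ f (x n), ∀ v ∈ f (y n), v < u) ∧ #(pdom f) = s} +
        Nat.card {f : K n → Option γ //
          StrictAntiPartial f ∧ (∃ u ∈ f (x n), ∃ v ∈ f (y n), u < v) ∧ #(pdom f) = s} +
        Nat.card {f : K n → Option γ //
          StrictAntiPartial f ∧ ((f (x n)).isSome ∧ f (x n) = f (y n)) ∧ #(pdom f) = s} := by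
  rw [← Nat.card_subtype_or_of_imp_not, ← Nat.card_subtype_or_of_imp_not]
  · refine Nat.card_congr (Equiv.subtypeEquivRight fun f => ?_)
    constructor
    · rintro ⟨hf, hs⟩
      rcases Option.lt_trichotomy_mem (f (x n)) (f (y n)) with h | h | h
      exacts [.inl (.inl ⟨⟨hf, h⟩, hs⟩), .inl (.inr ⟨hf, h, hs⟩), .inr ⟨hf, h, hs⟩]
    · rintro ((⟨⟨hf, -⟩, hs⟩ | ⟨hf, -, hs⟩) | ⟨hf, -, hs⟩) <;> exact ⟨hf, hs⟩
  · rintro f (⟨⟨-, hlt⟩, -⟩ | ⟨-, ⟨u, hu, v, hv, huv⟩, -⟩) ⟨-, ⟨hx, hxy⟩, -⟩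
    · obtain ⟨u, hu⟩ := Option.isSome_iff_exists.1 hx
      exact lt_irrefl u (hlt u hu u (hxy ▸ hu))
    · exact huv.ne (Option.mem_unique hu (hxy ▸ hv))
  · rintro f ⟨⟨-, hlt⟩, -⟩ ⟨-, ⟨u, hu, v, hv, huv⟩, -⟩
    exact (hlt u hu v hv).not_gt huv

theorem card_antichains_prod_succ (s : ℕ) :
    Nat.card {A : Finset (γ × K n) // IsAntichain (· ≤ ·) (A : Set (γ × K n)) ∧ #A = s + 1} =
      (2 * n + 2).choose (s + 1) * (Fintype.card γ).choose (s + 1) +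
        Nat.card {D : Finset (K n) // #D = s + 1 ∧ x n ∈ D ∧ y n ∈ D} *
          (Fintype.card γ + 1).choose (s + 1) := by
  have hgt : Nat.card {f : K n → Option γ // (StrictAntiPartial f ∧
      ∀ u ∈ f (x n), ∀ v ∈ f (y n), v < u) ∧ #(pdom f) = s + 1} =
        (2 * n + 2).choose (s + 1) * (Fintype.card γ).choose (s + 1) := by
    have := card_strictAntiPartial_of_x_gt_y (n := n) (γ := γ) (s + 1) fun _ => True
    simp only [and_true] at this
    rwa [Nat.card_eq_fintype_card (α := {D : Finset (K n) // #D = s + 1}),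
      Fintype.card_finset_len, card_eq] at this
  rw [card_antichains_eq_card_strictAntiPartial, card_strictAntiPartial_eq_add, hgt,
    card_strictAntiPartial_of_x_lt_y, card_strictAntiPartial_of_x_eq_y,
    card_finset_len_succ_mem_mem s x_ne_y,
    Nat.choose_succ_succ' (Fintype.card γ) s]
  ring

theorem card_antichains_fin_prod (n i : ℕ) (hi : 1 ≤ i) :
    Nat.card {A : Finset (Fin (2 * n + 1) × K n) //
        IsAntichain (· ≤ ·) (A : Set (Fin (2 * n + 1) × K n)) ∧ #A = i} =
      (2 * n + 2).choose i * Nat.card {D : Finset (K n) // #D = i ∧ (x n ∈ D → y n ∈ D)} := by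
  obtain ⟨s, rfl⟩ : ∃ s, i = s + 1 := ⟨i - 1, by omega⟩
  rw [card_antichains_prod_succ, card_finset_len_imp_eq_add, card_finset_len_notMem, card_eq,
    Fintype.card_fin, show 2 * n + 2 - 1 = 2 * n + 1 by omega]
  ring

end K

/-- The antichain generating polynomial of `[2n+1] × K_n` is palindromic of degree
`2n+2`: the number of antichains of size `i` equals that of size `2n+2-i` for
`1 ≤ i ≤ 2n+1`. -/
theorem N_poly_chain_K_palindromic (n : ℕ) : ∀ i : ℕ, 1 ≤ i → i ≤ 2 * n + 1 →
    Nat.card {A : Finset (Fin (2 * n + 1) × K n) //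
        IsAntichain (· ≤ ·) (A : Set (Fin (2 * n + 1) × K n)) ∧ A.card = i} =
      Nat.card {A : Finset (Fin (2 * n + 1) × K n) //
        IsAntichain (· ≤ ·) (A : Set (Fin (2 * n + 1) × K n)) ∧ A.card = 2 * n + 2 - i} := by
  intro i hi₁ hi₂
  rw [K.card_antichains_fin_prod n i hi₁,
    K.card_antichains_fin_prod n (2 * n + 2 - i) (by omega), Nat.choose_symm (by omega),
    card_finset_len_imp_compl i (by rw [K.card_eq]; omega), K.card_eq]
end

section
/- Every orbit of the Panyushev complement 𝔛 on the lower ideals of [2] × [2n-3] has size exactly 2n-1, there are exactly n-1 orbits, and each orbit contains exactly one lower ideal of cardinality 2n-3. -/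
/-!
Encode a lower set of `[2] × [m]` whose rows have lengths `b ≤ a` by the unordered pair `{b, a}`
of residues mod `m + 2`, or by `{b, m + 1}` when `a = b`. Computing the minimal elements of the
complement shows that `𝔛` becomes the rotation `{x, y} ↦ {x + 1, y + 1}`. Translating a pair by
`t` adds `2t` to its sum, so for `m + 2` odd the translations act freely and every orbit has
`m + 2` elements. A lower set has `m` elements exactly when its pair sums to `m`, which happens
for exactly one translate in each orbit; counting these representatives counts the orbits.
-/

open Classical in
/-- The Panyushev complement `𝔛`: the lower ideal generated by the minimal elements of the
complement of `I`. -/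
noncomputable def pan {P : Type*} [PartialOrder P] [Fintype P] (I : Finset P) : Finset P :=
  Finset.univ.filter
    (fun y => ∃ x, x ∉ I ∧ (∀ z, z ∉ I → z ≤ x → z = x) ∧ y ≤ x)

open Function Set

theorem mem_pan_iff {P : Type*} [PartialOrder P] [Fintype P] {I : Finset P} {y : P} :
    y ∈ pan I ↔ ∃ x, Minimal (· ∉ I) x ∧ y ≤ x := by
  simp only [pan, Finset.mem_filter, Finset.mem_univ, true_and, minimal_iff]
  grind

theorem isLowerSet_pan {P : Type*} [PartialOrder P] [Fintype P] (I : Finset P) :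
    IsLowerSet (pan I : Set P) := fun _ _ hzy hy ↦ by
  obtain ⟨x, hx, hyx⟩ := mem_pan_iff.1 hy
  exact mem_pan_iff.2 ⟨x, hx, hzy.trans hyx⟩

section Orbits

variable {α : Type*} {f : α → α}

theorem range_iterate_iterate_eq {x : α} (hx : x ∈ periodicPts f) (k : ℕ) :
    range (fun j ↦ f^[j] (f^[k] x)) = range (fun j ↦ f^[j] x) := by
  obtain ⟨p, hp, hpx⟩ := hx
  ext y
  constructor
  · rintro ⟨j, rfl⟩
    exact ⟨j + k, iterate_add_apply f j k x⟩
  · rintro ⟨j, rfl⟩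
    refine ⟨j + (p * k - k), ?_⟩
    dsimp only
    rw [iterate_add_apply, ← iterate_add_apply f (p * k - k),
      Nat.sub_add_cancel (Nat.le_mul_of_pos_left k hp), (hpx.mul_const k).eq]

theorem card_orbits_eq_card_of_existsUnique {L : Set α} {Q : α → Prop} (hfL : MapsTo f L L)
    (hper : L ⊆ periodicPts f) (hQ : ∀ x ∈ L, ∃! y, (∃ k, f^[k] x = y) ∧ Q y) :
    Nat.card {S : Set α // ∃ x, x ∈ L ∧ S = range (fun k ↦ f^[k] x)} =
      Nat.card {x // x ∈ L ∧ Q x} := by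
  symm
  refine Nat.card_eq_of_bijective (fun x ↦ ⟨range (fun k ↦ f^[k] x.1), x.1, x.2.1, rfl⟩) ⟨?_, ?_⟩
  · intro ⟨x, hxL, hxQ⟩ ⟨x', _, hx'Q⟩ h
    have hrange : range (fun k ↦ f^[k] x) = range (fun k ↦ f^[k] x') := congrArg Subtype.val h
    have hx' : x' ∈ range (fun k ↦ f^[k] x) := hrange ▸ ⟨0, rfl⟩
    exact Subtype.ext ((hQ x hxL).unique ⟨⟨0, rfl⟩, hxQ⟩ ⟨hx', hx'Q⟩)
  · rintro ⟨S, x, hxL, rfl⟩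
    obtain ⟨_, ⟨k, rfl⟩, hy⟩ := (hQ x hxL).exists
    exact ⟨⟨f^[k] x, hfL.iterate k hxL, hy⟩, Subtype.ext (range_iterate_iterate_eq (hper hxL) k)⟩

end Orbits

section RotatePair

variable {G : Type*}

def rotatePair [Add G] (t : G) : Sym2 G → Sym2 G := Sym2.map (t + ·)

def pairSum [AddCommMagma G] : Sym2 G → G := Sym2.lift ⟨(· + ·), add_comm⟩

@[simp] theorem rotatePair_mk [Add G] (t x y : G) : rotatePair t s(x, y) = s(t + x, t + y) := rfl

@[simp] theorem rotatePair_zero [AddZeroClass G] (z : Sym2 G) : rotatePair 0 z = z := by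
  induction z using Sym2.ind
  simp

@[simp] theorem pairSum_mk [AddCommMagma G] (x y : G) : pairSum s(x, y) = x + y := rfl

theorem rotatePair_rotatePair [AddSemigroup G] (s t : G) (z : Sym2 G) :
    rotatePair s (rotatePair t z) = rotatePair (s + t) z := by
  induction z using Sym2.ind
  simp [add_assoc]

theorem pairSum_rotatePair [AddCommMonoid G] (t : G) (z : Sym2 G) :
    pairSum (rotatePair t z) = pairSum z + 2 • t := by
  induction z using Sym2.ind
  simp only [rotatePair_mk, pairSum_mk, two_nsmul]
  abel

variable {N : ℕ}

theorem existsUnique_pairSum_rotatePair_eq (hN : Odd N) (z : Sym2 (ZMod N)) (c : ZMod N) :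
    ∃! t : ZMod N, pairSum (rotatePair t z) = c := by
  have h2 : IsUnit (2 : ZMod N) := by
    exact_mod_cast (ZMod.isUnit_iff_coprime 2 N).2 (Nat.coprime_two_left.2 hN)
  simp only [pairSum_rotatePair, nsmul_eq_mul, Nat.cast_ofNat]
  refine ⟨h2.unit⁻¹ * (c - pairSum z), ?_, fun t ht ↦ ?_⟩
  · dsimp only
    rw [← mul_assoc, IsUnit.mul_val_inv, one_mul, add_sub_cancel]
  · rw [← ht, add_sub_cancel_left, ← mul_assoc, IsUnit.val_inv_mul, one_mul]

theorem rotatePair_left_injective (hN : Odd N) (z : Sym2 (ZMod N)) :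
    Injective (rotatePair · z) := fun _ _ h ↦
  (existsUnique_pairSum_rotatePair_eq hN z _).unique (congrArg pairSum h) rfl

end RotatePair

structure RotationModel {α : Type*} (f : α → α) (L : Set α) (N : ℕ) where
  enc : α → Sym2 (ZMod N)
  mapsTo : MapsTo f L L
  injOn : InjOn enc L
  enc_apply : ∀ x ∈ L, enc (f x) = rotatePair 1 (enc x)

namespace RotationModel

variable {α : Type*} {f : α → α} {L : Set α} {N : ℕ} {x : α}

theorem enc_iterate (R : RotationModel f L N) (hx : x ∈ L) (k : ℕ) :
    R.enc (f^[k] x) = rotatePair (k : ZMod N) (R.enc x) := by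
  induction k with
  | zero => simp
  | succ k ih =>
    rw [iterate_succ_apply', R.enc_apply _ (R.mapsTo.iterate k hx), ih, rotatePair_rotatePair,
      Nat.cast_succ, add_comm]

theorem iterate_eq_iterate (R : RotationModel f L N) (hx : x ∈ L) {k l : ℕ}
    (h : (k : ZMod N) = l) : f^[k] x = f^[l] x :=
  R.injOn (R.mapsTo.iterate k hx) (R.mapsTo.iterate l hx) <| by
    rw [R.enc_iterate hx, h, R.enc_iterate hx]

theorem subset_periodicPts [NeZero N] (R : RotationModel f L N) : L ⊆ periodicPts f :=
  fun _ hx ↦ mk_mem_periodicPts (NeZero.pos N) (R.iterate_eq_iterate hx (l := 0) (by simp))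

theorem card_range_iterate (R : RotationModel f L N) (hN : Odd N) (hx : x ∈ L) :
    Nat.card (range fun k ↦ f^[k] x) = N := by
  have : NeZero N := ⟨hN.pos.ne'⟩
  have hrange : range (fun k ↦ f^[k] x) = range (fun t : ZMod N ↦ f^[t.val] x) := by
    ext y
    constructor
    · rintro ⟨k, rfl⟩
      exact ⟨k, R.iterate_eq_iterate hx (by simp)⟩
    · rintro ⟨t, rfl⟩
      exact ⟨t.val, rfl⟩
  rw [hrange, Nat.card_range_of_injective, Nat.card_zmod]
  intro s t h
  have := congrArg R.enc h
  rwa [R.enc_iterate hx, R.enc_iterate hx, ZMod.natCast_zmod_val, ZMod.natCast_zmod_val,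
    (rotatePair_left_injective hN _).eq_iff] at this

theorem existsUnique_mem_range_iterate (R : RotationModel f L N) (hN : Odd N) (hx : x ∈ L)
    {Q : α → Prop} {c : ZMod N} (hQ : ∀ y ∈ L, Q y ↔ pairSum (R.enc y) = c) :
    ∃! y, (∃ k, f^[k] x = y) ∧ Q y := by
  have : NeZero N := ⟨hN.pos.ne'⟩
  have hQk (k : ℕ) : Q (f^[k] x) ↔ pairSum (rotatePair (k : ZMod N) (R.enc x)) = c := by
    rw [hQ _ (R.mapsTo.iterate k hx), R.enc_iterate hx]
  obtain ⟨t, ht, ht_unique⟩ := existsUnique_pairSum_rotatePair_eq hN (R.enc x) c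
  refine ⟨f^[t.val] x, ⟨⟨t.val, rfl⟩, ?_⟩, ?_⟩
  · rwa [hQk, ZMod.natCast_zmod_val]
  · rintro _ ⟨⟨k, rfl⟩, hk⟩
    refine R.iterate_eq_iterate hx ?_
    rw [ZMod.natCast_zmod_val]
    exact ht_unique _ ((hQk k).1 hk)

end RotationModel

section TwoRows

variable {m : ℕ}

def rowLen (I : Finset (Fin 2 × Fin m)) (i : Fin 2) : ℕ :=
  (Finset.univ.filter fun j ↦ (i, j) ∈ I).card

theorem card_eq_rowLen_add_rowLen (I : Finset (Fin 2 × Fin m)) :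
    I.card = rowLen I 0 + rowLen I 1 := by
  calc I.card = (Finset.univ.filter (· ∈ I)).card := by
        rw [Finset.filter_mem_eq_inter, Finset.univ_inter]
    _ = ∑ i, rowLen I i := by
      simp only [Finset.card_filter, Fintype.sum_prod_type, rowLen]
    _ = rowLen I 0 + rowLen I 1 := Fin.sum_univ_two _

theorem rowLen_le (I : Finset (Fin 2 × Fin m)) (i : Fin 2) : rowLen I i ≤ m :=
  (Finset.card_le_univ _).trans_eq (Fintype.card_fin m)

theorem mem_iff_lt_rowLen {I : Finset (Fin 2 × Fin m)} (hI : IsLowerSet (I : Set (Fin 2 × Fin m)))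
    (p : Fin 2 × Fin m) : p ∈ I ↔ (p.2 : ℕ) < rowLen I p.1 :=
  (Fin.lt_card_filter_univ_iff_apply_of_imp (fun j ↦ (p.1, j) ∈ I)
    fun i j hji hi ↦ hI (show (p.1, j) ≤ (p.1, i) from ⟨le_rfl, hji⟩) hi).symm

theorem rowLen_one_le_rowLen_zero {I : Finset (Fin 2 × Fin m)}
    (hI : IsLowerSet (I : Set (Fin 2 × Fin m))) : rowLen I 1 ≤ rowLen I 0 :=
  Finset.card_le_card fun j ↦ by
    simpa using hI (show ((0 : Fin 2), j) ≤ (1, j) from ⟨Fin.zero_le _, le_rfl⟩)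

def rowSet (m a b : ℕ) : Finset (Fin 2 × Fin m) :=
  Finset.univ.filter fun p ↦ ((p.1 : ℕ) = 0 ∧ (p.2 : ℕ) < a) ∨ ((p.1 : ℕ) = 1 ∧ (p.2 : ℕ) < b)

theorem mem_rowSet {a b : ℕ} {p : Fin 2 × Fin m} :
    p ∈ rowSet m a b ↔ ((p.1 : ℕ) = 0 ∧ (p.2 : ℕ) < a) ∨ ((p.1 : ℕ) = 1 ∧ (p.2 : ℕ) < b) := by
  simp [rowSet]

theorem isLowerSet_rowSet {a b : ℕ} (hba : b ≤ a) :
    IsLowerSet (rowSet m a b : Set (Fin 2 × Fin m)) := fun p q ⟨h1, h2⟩ hq ↦ by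
  simp only [Finset.mem_coe, mem_rowSet, Fin.le_def] at *
  omega

theorem rowLen_rowSet {a b : ℕ} (ha : a ≤ m) (hb : b ≤ m) :
    rowLen (rowSet m a b) 0 = a ∧ rowLen (rowSet m a b) 1 = b := by
  simp [rowLen, mem_rowSet, Fin.card_filter_val_lt, ha, hb]

theorem eq_rowSet {I : Finset (Fin 2 × Fin m)} (hI : IsLowerSet (I : Set (Fin 2 × Fin m))) :
    I = rowSet m (rowLen I 0) (rowLen I 1) := by
  ext ⟨i, j⟩
  rw [mem_iff_lt_rowLen hI, mem_rowSet]
  fin_cases i <;> simp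

theorem eq_of_rowLen_eq {I J : Finset (Fin 2 × Fin m)} (hI : IsLowerSet (I : Set (Fin 2 × Fin m)))
    (hJ : IsLowerSet (J : Set (Fin 2 × Fin m))) (h0 : rowLen I 0 = rowLen J 0)
    (h1 : rowLen I 1 = rowLen J 1) : I = J := by
  rw [eq_rowSet hI, eq_rowSet hJ, h0, h1]

end TwoRows

section TwoRowsPan

variable {m a b : ℕ}

theorem minimal_notMem_rowSet_iff (hba : b ≤ a) (ham : a ≤ m) (x : Fin 2 × Fin m) :
    Minimal (· ∉ rowSet m a b) x ↔
      ((x.1 : ℕ) = 0 ∧ (x.2 : ℕ) = a) ∨ ((x.1 : ℕ) = 1 ∧ (x.2 : ℕ) = b ∧ b < a) := by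
  simp only [minimal_iff, mem_rowSet, Prod.le_def, Prod.ext_iff, Fin.le_def, Fin.ext_iff]
  constructor
  · rintro ⟨hx, hmin⟩
    obtain h1 | h1 : (x.1 : ℕ) = 0 ∨ (x.1 : ℕ) = 1 := by omega
    · have := hmin (y := (0, ⟨a, by omega⟩))
      simp only [Fin.val_zero] at this
      omega
    · have := hmin (y := (1, ⟨b, by omega⟩))
      -- `(0, x.2)` lies below `x` and is outside the set unless `b < a`
      have := hmin (y := (0, x.2))
      simp only [Fin.val_zero, Fin.val_one] at *
      omega
  · rintro (⟨h1, h2⟩ | ⟨h1, h2, h3⟩)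
    · refine ⟨by omega, fun y hy hyx ↦ ?_⟩
      omega
    · refine ⟨by omega, fun y hy hyx ↦ ?_⟩
      omega

theorem mem_pan_rowSet_iff (hba : b ≤ a) (ham : a ≤ m) (y : Fin 2 × Fin m) :
    y ∈ pan (rowSet m a b) ↔
      (a < m ∧ (y.1 : ℕ) = 0 ∧ (y.2 : ℕ) ≤ a) ∨ (b < a ∧ (y.2 : ℕ) ≤ b) := by
  simp only [mem_pan_iff, minimal_notMem_rowSet_iff hba ham, Prod.le_def, Fin.le_def]
  constructor
  · rintro ⟨x, hx, hyx⟩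
    omega
  · rintro (⟨ha, hy1, hy2⟩ | ⟨hb, hy2⟩)
    · exact ⟨(0, ⟨a, ha⟩), by simp, by simp [hy1, hy2]⟩
    · refine ⟨(1, ⟨b, by omega⟩), by simp [hb], ?_, by simpa using hy2⟩
      simp only [Fin.val_one]
      omega

def rowStep (m a b : ℕ) : ℕ × ℕ :=
  if a < m then (a + 1, if b < a then b + 1 else 0)
  else if b < a then (b + 1, b + 1) else (0, 0)

theorem rowStep_snd_le_fst (m a b : ℕ) : (rowStep m a b).2 ≤ (rowStep m a b).1 := by
  unfold rowStep; split_ifs <;> dsimp only <;> omega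

theorem rowStep_fst_le (ham : a ≤ m) : (rowStep m a b).1 ≤ m := by
  unfold rowStep; split_ifs <;> dsimp only <;> omega

theorem pan_rowSet (hba : b ≤ a) (ham : a ≤ m) :
    pan (rowSet m a b) = rowSet m (rowStep m a b).1 (rowStep m a b).2 := by
  ext y
  rw [mem_pan_rowSet_iff hba ham, mem_rowSet, rowStep]
  split_ifs <;> dsimp only <;> omega

end TwoRowsPan

section PairCode

variable {m a b : ℕ}

def pairCode (m a b : ℕ) : Sym2 (ZMod (m + 2)) :=
  s((b : ZMod (m + 2)), ((if b < a then a else m + 1 : ℕ) : ZMod (m + 2)))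

theorem pairCode_rowStep (hba : b ≤ a) (ham : a ≤ m) :
    pairCode m (rowStep m a b).1 (rowStep m a b).2 = rotatePair 1 (pairCode m a b) := by
  have hN : (m + 1 + 1 : ZMod (m + 2)) = 0 := by exact_mod_cast ZMod.natCast_self (m + 2)
  obtain ha | rfl := ham.lt_or_eq <;> obtain hb | rfl := hba.lt_or_eq
  · simp [pairCode, rowStep, ha, hb, add_comm]
  · simp only [pairCode, rowStep, ha, lt_irrefl, if_true, if_false, if_pos b.succ_pos,
      rotatePair_mk, Sym2.eq_iff]
    push_cast
    exact Or.inr ⟨by linear_combination -hN, by ring⟩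
  · simp [pairCode, rowStep, hb, add_comm]
  · simp only [pairCode, rowStep, lt_irrefl, if_false, rotatePair_mk, Sym2.eq_iff]
    push_cast
    exact Or.inr ⟨by linear_combination -hN, by ring⟩

theorem pairCode_inj {a' b' : ℕ} (hba : b ≤ a) (ham : a ≤ m) (hba' : b' ≤ a') (ham' : a' ≤ m)
    (h : pairCode m a b = pairCode m a' b') : a = a' ∧ b = b' := by
  have hval := congrArg (Sym2.map ZMod.val) h
  unfold pairCode at hval
  split_ifs at hval <;>
    simp (disch := omega) only [Sym2.map_mk, ZMod.val_cast_of_lt, Sym2.eq_iff] at hval <;>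
    omega

theorem add_eq_iff_pairSum_pairCode_eq (hm : Odd m) (hba : b ≤ a) (ham : a ≤ m) :
    a + b = m ↔ pairSum (pairCode m a b) = m := by
  have hmod {x : ℕ} (hx : x < 2 * (m + 2)) : x % (m + 2) = m ↔ x = m ∨ x = m + (m + 2) := by
    rcases lt_or_ge x (m + 2) with h | h
    · rw [Nat.mod_eq_of_lt h]; omega
    · rw [Nat.mod_eq_sub_mod h, Nat.mod_eq_of_lt (by omega)]; omega
  obtain ⟨k, rfl⟩ := hm
  rw [pairCode, pairSum_mk, ← Nat.cast_add, ZMod.natCast_eq_natCast_iff',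
    Nat.mod_eq_of_lt (by omega : 2 * k + 1 < 2 * k + 1 + 2), hmod (by split_ifs <;> omega)]
  split_ifs <;> omega

end PairCode

section LowerSets

variable {m : ℕ}

theorem rowLen_pan {I : Finset (Fin 2 × Fin m)} (hI : IsLowerSet (I : Set (Fin 2 × Fin m))) :
    rowLen (pan I) 0 = (rowStep m (rowLen I 0) (rowLen I 1)).1 ∧
      rowLen (pan I) 1 = (rowStep m (rowLen I 0) (rowLen I 1)).2 := by
  have hstep := rowStep_fst_le (b := rowLen I 1) (rowLen_le I 0)
  have hpan : pan I = rowSet m (rowStep m (rowLen I 0) (rowLen I 1)).1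
      (rowStep m (rowLen I 0) (rowLen I 1)).2 := by
    conv_lhs => rw [eq_rowSet hI]
    exact pan_rowSet (rowLen_one_le_rowLen_zero hI) (rowLen_le I 0)
  rw [hpan]
  exact rowLen_rowSet hstep ((rowStep_snd_le_fst _ _ _).trans hstep)

def lowerSetsRotationModel (m : ℕ) :
    RotationModel (pan (P := Fin 2 × Fin m)) {I | IsLowerSet (I : Set (Fin 2 × Fin m))}
      (m + 2) where
  enc I := pairCode m (rowLen I 0) (rowLen I 1)
  mapsTo I _ := isLowerSet_pan I
  injOn I hI J hJ h := by
    obtain ⟨h0, h1⟩ := pairCode_inj (rowLen_one_le_rowLen_zero hI) (rowLen_le I 0)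
      (rowLen_one_le_rowLen_zero hJ) (rowLen_le J 0) h
    exact eq_of_rowLen_eq hI hJ h0 h1
  enc_apply I hI := by
    obtain ⟨h0, h1⟩ := rowLen_pan hI
    rw [h0, h1, pairCode_rowStep (rowLen_one_le_rowLen_zero hI) (rowLen_le I 0)]

theorem card_eq_iff_pairSum_enc_eq (hm : Odd m) {I : Finset (Fin 2 × Fin m)}
    (hI : IsLowerSet (I : Set (Fin 2 × Fin m))) :
    I.card = m ↔ pairSum ((lowerSetsRotationModel m).enc I) = m := by
  rw [card_eq_rowLen_add_rowLen]
  exact add_eq_iff_pairSum_pairCode_eq hm (rowLen_one_le_rowLen_zero hI) (rowLen_le I 0)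

theorem card_lowerSets_card_eq (m : ℕ) :
    Nat.card {I : Finset (Fin 2 × Fin m) // IsLowerSet (I : Set (Fin 2 × Fin m)) ∧ I.card = m} =
      m / 2 + 1 := by
  have hlt (I : Finset (Fin 2 × Fin m)) (hI : IsLowerSet (I : Set (Fin 2 × Fin m)) ∧ I.card = m) :
      rowLen I 1 < m / 2 + 1 := by
    have := card_eq_rowLen_add_rowLen I
    have := rowLen_one_le_rowLen_zero hI.1
    omega
  refine (Nat.card_eq_of_bijective (fun I ↦ (⟨rowLen I.1 1, hlt I.1 I.2⟩ : Fin (m / 2 + 1)))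
    ⟨?_, ?_⟩).trans (Nat.card_fin _)
  · intro ⟨I, hI, hIm⟩ ⟨J, hJ, hJm⟩ h
    have h1 : rowLen I 1 = rowLen J 1 := congrArg Fin.val h
    have := card_eq_rowLen_add_rowLen I
    have := card_eq_rowLen_add_rowLen J
    exact Subtype.ext (eq_of_rowLen_eq hI hJ (by omega : rowLen I 0 = rowLen J 0) h1)
  · intro ⟨b, hb⟩
    obtain ⟨h0, h1⟩ := rowLen_rowSet (m := m) (a := m - b) (b := b) (by omega) (by omega)
    refine ⟨⟨rowSet m (m - b) b, isLowerSet_rowSet (by omega), ?_⟩, Fin.ext h1⟩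
    rw [card_eq_rowLen_add_rowLen, h0, h1]
    omega

end LowerSets

/-- For `n ≥ 2`, every `𝔛`-orbit on lower ideals of `[2] × [2n-3]` has size `2n-1` and
contains a unique lower ideal of cardinality `2n-3`; and there are exactly `n-1` orbits.
(This is the extra-special `Δ(1)` of type `Bₙ`.) -/
theorem panyushev_orbits_B (n : ℕ) (hn : 2 ≤ n) :
    (∀ I : Finset (Fin 2 × Fin (2 * n - 3)),
      IsLowerSet (I : Set (Fin 2 × Fin (2 * n - 3))) →
        Nat.card {J : Finset (Fin 2 × Fin (2 * n - 3)) // ∃ k : ℕ, pan^[k] I = J} =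
            2 * n - 1 ∧
          ∃! J : Finset (Fin 2 × Fin (2 * n - 3)),
            (∃ k : ℕ, pan^[k] I = J) ∧ J.card = 2 * n - 3) ∧
      Nat.card {S : Set (Finset (Fin 2 × Fin (2 * n - 3))) //
          ∃ I : Finset (Fin 2 × Fin (2 * n - 3)),
            IsLowerSet (I : Set (Fin 2 × Fin (2 * n - 3))) ∧
              S = {J | ∃ k : ℕ, pan^[k] I = J}} = n - 1 := by
  set m := 2 * n - 3
  have hm : Odd m := ⟨n - 2, by omega⟩
  have hN : Odd (m + 2) := hm.add_even even_two
  let R := lowerSetsRotationModel m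
  have hunique (I : Finset (Fin 2 × Fin m)) (hI : IsLowerSet (I : Set (Fin 2 × Fin m))) :
      ∃! J, (∃ k, pan^[k] I = J) ∧ J.card = m :=
    R.existsUnique_mem_range_iterate hN hI fun J hJ ↦ card_eq_iff_pairSum_enc_eq hm hJ
  refine ⟨fun I hI ↦ ⟨(R.card_range_iterate hN hI).trans (by omega), hunique I hI⟩, ?_⟩
  exact (card_orbits_eq_card_of_existsUnique R.mapsTo R.subset_periodicPts hunique).trans
    ((card_lowerSets_card_eq m).trans (by omega))
end
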